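/- Let G and H be connected finite simple graphs, each equipped with a graph hierarchy up to level K with surjective coarsening maps, and let D_G and D_H denote the resulting HDSE encodings with maximum level K. Fix initial colorings on the vertices of G and of H with colors in a common type. If the GD-WL test with the shortest-path distances SPD_G and SPD_H distinguishes G and H at some iteration t, then the GD-WL test with the HDSE encodings D_G and D_H also distinguishes G and H at iteration t. Hence GD-WL with HDSE is at least as expressive as GD-WL with shortest-path distance. -/

import Mathlib

/-!
GD-WL colours are nested multisets of distance values, so post-composing the distance function
with any map `f` changes every colour only by applying `f` to the distances inside it. A
distinction made with `f ∘ d` is therefore already made with `d`. The level-0 coordinate of the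
HDSE encoding is the shortest-path distance, so projecting onto it gives the theorem.
-/

universe u

/-- The coarse graph on `V'` induced by a graph `G` on `V` and a map `φ : V → V'`. -/
def coarseGraph {V V' : Type*} (G : SimpleGraph V) (φ : V → V') : SimpleGraph V' where
  Adj a b := a ≠ b ∧ ∃ u v : V, φ u = a ∧ φ v = b ∧ G.Adj u v
  symm := ⟨by
    rintro a b ⟨hab, u, v, hu, hv, huv⟩
    exact ⟨hab.symm, v, u, hv, hu, huv.symm⟩⟩
  loopless := ⟨fun a h => h.1 rfl⟩

/-- The composed projection `ψ_k = φ_{k-1} ∘ ⋯ ∘ φ₀` of a graph hierarchy. -/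
def hierProj {V : ℕ → Type*} (φ : ∀ k, V k → V (k + 1)) : ∀ k, V 0 → V k
  | 0 => id
  | (k + 1) => φ k ∘ hierProj φ k

/-- The type of iteration-`t` GD-WL colors, starting from colors in `C` and distances in `A`. -/
def WLColor (A C : Type u) : ℕ → Type u
  | 0 => C
  | (t + 1) => Multiset (A × WLColor A C t)

/-- The GD-WL coloring of a finite vertex set `V` with distance function `d : V → V → A` and
initial coloring `χ⁰ : V → C`: `χ^{t+1}(v) = {{(d v u, χ^t u) : u ∈ V}}` (a multiset). -/
def gdwl {V : Type*} {A C : Type u} [Fintype V]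
    (d : V → V → A) (χ0 : V → C) : ∀ t : ℕ, V → WLColor A C t
  | 0 => χ0
  | (t + 1) => fun v =>
      (Finset.univ.val.map (fun u : V => (d v u, gdwl d χ0 t u)) : Multiset (A × WLColor A C t))

def WLColor.mapDist {A B C : Type u} (f : A → B) : ∀ t, WLColor A C t → WLColor B C t
  | 0 => id
  | (t + 1) => Multiset.map (fun p => (f p.1, WLColor.mapDist f t p.2))

section

variable {V W : Type*} [Fintype V] [Fintype W] {A B C : Type u}

theorem gdwl_comp (d : V → V → A) (f : A → B) (χ0 : V → C) (t : ℕ) (v : V) :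
    gdwl (fun u w => f (d u w)) χ0 t v = WLColor.mapDist f t (gdwl d χ0 t v) := by
  induction t generalizing v with
  | zero => rfl
  | succ t ih =>
    simp only [gdwl, WLColor.mapDist, Multiset.map_map, Function.comp_def, ih]
    rfl

theorem map_gdwl_ne_of_map_gdwl_comp_ne (dV : V → V → A) (dW : W → W → A) (f : A → B)
    (χV : V → C) (χW : W → C) (t : ℕ)
    (h : Finset.univ.val.map (gdwl (fun u v => f (dV u v)) χV t) ≠
      Finset.univ.val.map (gdwl (fun u v => f (dW u v)) χW t)) :
    Finset.univ.val.map (gdwl dV χV t) ≠ Finset.univ.val.map (gdwl dW χW t) := by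
  intro hcol
  apply h
  have := congrArg (Multiset.map (WLColor.mapDist f t)) hcol
  simpa only [Multiset.map_map, Function.comp_def, ← gdwl_comp] using this

end

theorem gdwl_hdse_at_least_as_expressive_as_spd_general
    {VG VH : ℕ → Type*} [∀ k, Fintype (VG k)] [∀ k, Fintype (VH k)]
    (GG : ∀ k, SimpleGraph (VG k)) (GH : ∀ k, SimpleGraph (VH k))
    (φG : ∀ k, VG k → VG (k + 1)) (φH : ∀ k, VH k → VH (k + 1)) (K : ℕ)
    {C : Type} (χG : VG 0 → C) (χH : VH 0 → C) (t : ℕ)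
    (hspd :
      Finset.univ.val.map (gdwl (fun u v => (GG 0).dist u v) χG t) ≠
        Finset.univ.val.map (gdwl (fun u v => (GH 0).dist u v) χH t)) :
    Finset.univ.val.map
        (gdwl (fun u v => fun k : Fin (K + 1) =>
          (GG k.1).dist (hierProj φG k.1 u) (hierProj φG k.1 v)) χG t) ≠
      Finset.univ.val.map
        (gdwl (fun u v => fun k : Fin (K + 1) =>
          (GH k.1).dist (hierProj φH k.1 u) (hierProj φH k.1 v)) χH t) :=
  map_gdwl_ne_of_map_gdwl_comp_ne _ _ (fun D : Fin (K + 1) → ℕ => D 0) χG χH t hspd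

/-- Let `G` and `H` be connected finite simple graphs, each equipped with a
graph hierarchy up to level `K` with surjective coarsening maps (the `(k+1)`-st graph being the
induced coarse graph of the `k`-th). Let `D_G(u,v) = (GHD⁰(u,v), …, GHD^K(u,v))` be the HDSE
encodings, where `GHD^k(u,v) = dist_{G^k}(ψ_k u, ψ_k v)`. If, with initial colorings `χG, χH`
in a common type `C`, the GD-WL test with shortest-path distances distinguishes `G` and `H` at
iteration `t`, then the GD-WL test with the HDSE encodings also distinguishes them at
iteration `t`. -/
theorem gdwl_hdse_at_least_as_expressive_as_spd
    {VG VH : ℕ → Type*} [∀ k, Fintype (VG k)] [∀ k, Fintype (VH k)]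
    (GG : ∀ k, SimpleGraph (VG k)) (GH : ∀ k, SimpleGraph (VH k))
    (φG : ∀ k, VG k → VG (k + 1)) (φH : ∀ k, VH k → VH (k + 1)) (K : ℕ)
    (hGconn : (GG 0).Connected) (hHconn : (GH 0).Connected)
    (hGsurj : ∀ k < K, Function.Surjective (φG k))
    (hHsurj : ∀ k < K, Function.Surjective (φH k))
    (hGcoarse : ∀ k < K, GG (k + 1) = coarseGraph (GG k) (φG k))
    (hHcoarse : ∀ k < K, GH (k + 1) = coarseGraph (GH k) (φH k))
    {C : Type} (χG : VG 0 → C) (χH : VH 0 → C) (t : ℕ)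
    (hspd :
      Finset.univ.val.map (gdwl (fun u v => (GG 0).dist u v) χG t) ≠
        Finset.univ.val.map (gdwl (fun u v => (GH 0).dist u v) χH t)) :
    Finset.univ.val.map
        (gdwl (fun u v => fun k : Fin (K + 1) =>
          (GG k.1).dist (hierProj φG k.1 u) (hierProj φG k.1 v)) χG t) ≠
      Finset.univ.val.map
        (gdwl (fun u v => fun k : Fin (K + 1) =>
          (GH k.1).dist (hierProj φH k.1 u) (hierProj φH k.1 v)) χH t) :=
  gdwl_hdse_at_least_as_expressive_as_spd_general GG GH φG φH K χG χH t hspd
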